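/- arXiv:1905.12097 — 9 statements merged into one kernel-verified Lean document; each statement's English description precedes it below -/
import Mathlib

section
/- Let S be a finite set of vectors in ℤ^n such that for every Q = (q_1, ..., q_n) in S, gcd(q_1, ..., q_n) = 1. Then there exists a homogeneous polynomial f in ℤ[x_1, ..., x_n] of degree d ≥ 1 such that f(Q) = 1 for every Q in S. -/
/-!
Induction on `S`. Let `f` be homogeneous of degree `d ≥ 1` with `f = 1` on `S`, let `Q` be a
new primitive point and `c = f(Q)`. For each `P ∈ S` some linear form vanishes at `P` and takes
a value coprime to `c` at `Q`: otherwise a maximal ideal contains `c` and all `2 × 2` minors of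
`(P, Q)`, so modulo it `Q = λ P` with `λ ≠ 0`, and `c = λ ^ d f(P) = λ ^ d` is not zero there.
The product `g` of these forms vanishes on `S` and `M = g(Q)` is coprime to `c`, so
`M ∣ c ^ k - 1` for arbitrarily large `k`. With a linear form `L` such that `L(Q) = 1`, the
polynomial `f ^ k - ((c ^ k - 1) / M) L ^ (k d - |S|) g` is homogeneous and equals `1` on
`S ∪ {Q}`.
-/

open MvPolynomial

namespace MvPolynomial

variable {σ R : Type*}

theorem IsHomogeneous.eval_smul [CommSemiring R] {f : MvPolynomial σ R} {d : ℕ}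
    (hf : f.IsHomogeneous d) (r : R) (x : σ → R) :
    eval (r • x) f = r ^ d * eval x f := by
  simp only [eval_eq, Finset.mul_sum]
  refine Finset.sum_congr rfl fun s hs => ?_
  simp only [Pi.smul_apply, smul_eq_mul, mul_pow, Finset.prod_mul_distrib,
    Finset.prod_pow_eq_pow_sum, ← hf.degree_eq_sum_deg_support hs]
  ring

theorem IsHomogeneous.eval_ne_zero_of_minors_eq_zero {K : Type*} [Field K]
    {f : MvPolynomial σ K} {d : ℕ} (hf : f.IsHomogeneous d) {P Q : σ → K} (hP : P ≠ 0)
    (hQ : Q ≠ 0) (hPQ : ∀ i j, P i * Q j = P j * Q i) (hfP : eval P f ≠ 0) :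
    eval Q f ≠ 0 := by
  obtain ⟨i, hi⟩ := Function.ne_iff.mp hP
  have hQP : Q = (Q i / P i) • P := by
    ext j
    simp only [Pi.smul_apply, smul_eq_mul, Pi.zero_apply] at hi ⊢
    field_simp
    linear_combination hPQ i j
  have hc : Q i / P i ≠ 0 := by
    intro h
    exact hQ (by rw [hQP, h, zero_smul])
  rw [hQP, hf.eval_smul]
  exact mul_ne_zero (pow_ne_zero d hc) hfP

variable [CommRing R]

noncomputable def minorForm (P : σ → R) (i j : σ) : MvPolynomial σ R :=
  C (P i) * X j - C (P j) * X i

theorem isHomogeneous_minorForm (P : σ → R) (i j : σ) : (minorForm P i j).IsHomogeneous 1 :=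
  (isHomogeneous_C_mul_X _ _).sub (isHomogeneous_C_mul_X _ _)

theorem eval_minorForm (P Q : σ → R) (i j : σ) :
    eval Q (minorForm P i j) = P i * Q j - P j * Q i := by
  simp [minorForm]

theorem eval_minorForm_self (P : σ → R) (i j : σ) : eval P (minorForm P i j) = 0 := by
  rw [eval_minorForm, mul_comm, sub_self]

theorem _root_.Ideal.exists_notMem_of_span_range_eq_top {I : Ideal R} {P : σ → R}
    (hP : Ideal.span (Set.range P) = ⊤) (hI : I ≠ ⊤) : ∃ i, P i ∉ I := by
  by_contra! h
  exact hI (eq_top_iff.mpr (hP ▸ Ideal.span_le.mpr (Set.range_subset_iff.mpr h)))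

theorem IsHomogeneous.span_eval_sup_span_range_eval_minorForm_eq_top {P Q : σ → R}
    (hP : Ideal.span (Set.range P) = ⊤) (hQ : Ideal.span (Set.range Q) = ⊤)
    {f : MvPolynomial σ R} {d : ℕ} (hf : f.IsHomogeneous d) (hfP : eval P f = 1) :
    Ideal.span {eval Q f} ⊔
      Ideal.span (Set.range fun ij : σ × σ ↦ eval Q (minorForm P ij.1 ij.2)) = ⊤ := by
  by_contra hne
  obtain ⟨m, hm, hle⟩ := Ideal.exists_le_maximal _ hne
  rw [sup_le_iff, Ideal.span_le, Set.singleton_subset_iff, Ideal.span_le,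
    Set.range_subset_iff] at hle
  let := Ideal.Quotient.field m
  let π := Ideal.Quotient.mk m
  have hπ (x : σ → R) (g : MvPolynomial σ R) : eval (π ∘ x) (map π g) = π (eval x g) := by
    rw [eval_map, eval₂_comp]
  have hnz {x : σ → R} (hx : Ideal.span (Set.range x) = ⊤) : π ∘ x ≠ 0 := by
    obtain ⟨i, hi⟩ := Ideal.exists_notMem_of_span_range_eq_top hx hm.ne_top
    exact Function.ne_iff.mpr ⟨i, by simpa [π, Ideal.Quotient.eq_zero_iff_mem] using hi⟩
  refine (hf.map π).eval_ne_zero_of_minors_eq_zero (hnz hP) (hnz hQ) (fun i j => ?_) ?_ ?_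
  · simp only [Function.comp_apply]
    rw [← map_mul, ← map_mul, ← sub_eq_zero, ← map_sub, Ideal.Quotient.eq_zero_iff_mem,
      ← eval_minorForm]
    exact hle.2 (i, j)
  · simp [hπ, hfP]
  · simpa [hπ, π, Ideal.Quotient.eq_zero_iff_mem] using hle.1

theorem IsHomogeneous.exists_isHomogeneous_one_eval_eq_zero_isCoprime [Fintype σ]
    {P Q : σ → R} (hP : Ideal.span (Set.range P) = ⊤) (hQ : Ideal.span (Set.range Q) = ⊤)
    {f : MvPolynomial σ R} {d : ℕ} (hf : f.IsHomogeneous d) (hfP : eval P f = 1) :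
    ∃ A : MvPolynomial σ R, A.IsHomogeneous 1 ∧ eval P A = 0 ∧
      IsCoprime (eval Q f) (eval Q A) := by
  obtain ⟨y, hy, z, hz, hyz⟩ := Submodule.mem_sup.mp <|
    (Ideal.eq_top_iff_one _).mp (hf.span_eval_sup_span_range_eval_minorForm_eq_top hP hQ hfP)
  obtain ⟨a, rfl⟩ := Ideal.mem_span_singleton'.mp hy
  obtain ⟨b, rfl⟩ := (Submodule.mem_span_range_iff_exists_fun R).mp hz
  refine ⟨∑ ij, C (b ij) * minorForm P ij.1 ij.2,
    IsHomogeneous.sum _ _ _ fun ij _ => (isHomogeneous_minorForm P _ _).C_mul _,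
    by simp [eval_minorForm_self], a, 1, ?_⟩
  simpa using hyz

theorem IsHomogeneous.exists_isHomogeneous_card_eval_eq_zero_isCoprime [Fintype σ]
    {S : Finset (σ → R)} {Q : σ → R} (hS : ∀ P ∈ S, Ideal.span (Set.range P) = ⊤)
    (hQ : Ideal.span (Set.range Q) = ⊤) {f : MvPolynomial σ R} {d : ℕ} (hf : f.IsHomogeneous d)
    (hfS : ∀ P ∈ S, eval P f = 1) :
    ∃ g : MvPolynomial σ R, g.IsHomogeneous S.card ∧ (∀ P ∈ S, eval P g = 0) ∧
      IsCoprime (eval Q f) (eval Q g) := by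
  choose! A hA using fun P hP =>
    hf.exists_isHomogeneous_one_eval_eq_zero_isCoprime (hS P hP) hQ (hfS P hP)
  refine ⟨∏ P ∈ S, A P, ?_, fun P hP => ?_, ?_⟩
  · simpa using IsHomogeneous.prod S A (fun _ => 1) fun P hP => (hA P hP).1
  · rw [map_prod]
    exact Finset.prod_eq_zero hP (hA P hP).2.1
  · rw [map_prod]
    exact IsCoprime.prod_right fun P hP => (hA P hP).2.2

end MvPolynomial

theorem Int.exists_le_and_dvd_pow_sub_one {c M : ℤ} (h : IsCoprime c M) (N : ℕ) :
    ∃ k, N ≤ k ∧ M ∣ c ^ k - 1 := by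
  -- `ZMod 0 = ℤ`, whose unit group `{±1}` is finite as well, so `M = 0` needs no special case.
  have hM : (M : ZMod M.natAbs) = 0 :=
    (ZMod.intCast_zmod_eq_zero_iff_dvd _ _).mpr Int.natAbs_dvd_self
  obtain ⟨u, hu⟩ : IsUnit (c : ZMod M.natAbs) :=
    isCoprime_zero_right.mp (hM ▸ h.map (Int.castRingHom (ZMod M.natAbs)))
  refine ⟨orderOf u * N, Nat.le_mul_of_pos_left N (orderOf_pos u), ?_⟩
  rw [← Int.natAbs_dvd, ← ZMod.intCast_zmod_eq_zero_iff_dvd, Int.cast_sub, Int.cast_pow,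
    Int.cast_one, sub_eq_zero, ← hu, ← Units.val_pow_eq_pow_val, pow_mul,
    pow_orderOf_eq_one, one_pow, Units.val_one]

theorem Int.span_range_eq_top_of_gcd_eq_one {ι : Type*} [Fintype ι] {x : ι → ℤ}
    (hx : Finset.univ.gcd x = 1) : Ideal.span (Set.range x) = ⊤ := by
  obtain ⟨g, hg⟩ := Finset.univ.gcd_eq_sum_mul x
  rw [Ideal.eq_top_iff_one, ← hx, hg]
  exact Ideal.sum_mem _ fun i _ => Ideal.mul_mem_right _ _ (Ideal.subset_span ⟨i, rfl⟩)

theorem exists_isHomogeneous_eval_eq_one_insert {σ : Type*} [Fintype σ]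
    {S : Finset (σ → ℤ)} {Q : σ → ℤ} (hS : ∀ P ∈ S, Ideal.span (Set.range P) = ⊤)
    (hQ : Ideal.span (Set.range Q) = ⊤) {f : MvPolynomial σ ℤ} {d : ℕ} (hd : 1 ≤ d)
    (hf : f.IsHomogeneous d) (hfS : ∀ P ∈ S, eval P f = 1) :
    ∃ (F : MvPolynomial σ ℤ) (e : ℕ), 1 ≤ e ∧ F.IsHomogeneous e ∧
      ∀ P ∈ insert Q S, eval P F = 1 := by
  obtain ⟨g, hg, hgS, hcop⟩ := hf.exists_isHomogeneous_card_eval_eq_zero_isCoprime hS hQ hfS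
  obtain ⟨k, hk, u, hu⟩ := Int.exists_le_and_dvd_pow_sub_one hcop (S.card + 1)
  obtain ⟨L, hL, hLQ⟩ :=
    (Ideal.mem_span_iff_exists_isHomogeneous Q 1).mp (hQ ▸ Submodule.mem_top)
  have hkd : S.card + 1 ≤ k * d := hk.trans (Nat.le_mul_of_pos_right k hd)
  refine ⟨f ^ k - C u * L ^ (k * d - S.card) * g, k * d, by omega, ?_, ?_⟩
  · refine (mul_comm d k ▸ hf.pow k).sub ?_
    have := ((hL.pow (k * d - S.card)).C_mul u).mul hg
    rwa [one_mul, Nat.sub_add_cancel (by omega)] at this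
  · refine Finset.forall_mem_insert _ _ _ |>.mpr ⟨?_, fun P hP => ?_⟩
    · simp only [map_sub, map_mul, map_pow, eval_C, hLQ]
      linear_combination hu
    · simp [hfS P hP, hgS P hP]

theorem exists_isHomogeneous_eval_eq_one {σ : Type*} [Fintype σ] (S : Finset (σ → ℤ))
    (hS : ∀ Q ∈ S, Ideal.span (Set.range Q) = ⊤) :
    ∃ (f : MvPolynomial σ ℤ) (d : ℕ), 1 ≤ d ∧ f.IsHomogeneous d ∧
      ∀ Q ∈ S, eval Q f = 1 := by
  classical
  induction S using Finset.induction_on with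
  | empty => exact ⟨0, 1, le_rfl, isHomogeneous_zero _ _ _, by simp⟩
  | insert Q S _ ih =>
    have hS' := fun P hP => hS P (Finset.mem_insert_of_mem hP)
    obtain ⟨f, d, hd, hf, hfS⟩ := ih hS'
    exact exists_isHomogeneous_eval_eq_one_insert hS' (hS Q (Finset.mem_insert_self Q S))
      hd hf hfS

/-- Interpolation over ℤ: if every vector in the finite set `S ⊆ ℤ^n` has
coordinates with gcd equal to 1, then there is a nonconstant homogeneous
polynomial over ℤ evaluating to 1 at each point of `S`. -/
theorem interpolation_int (n : ℕ) (S : Finset (Fin n → ℤ))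
    (hS : ∀ Q ∈ S, Finset.univ.gcd Q = 1) :
    ∃ (f : MvPolynomial (Fin n) ℤ) (d : ℕ), 1 ≤ d ∧ f.IsHomogeneous d ∧
      ∀ Q ∈ S, MvPolynomial.eval Q f = 1 :=
  exists_isHomogeneous_eval_eq_one S fun Q hQ => Int.span_range_eq_top_of_gcd_eq_one (hS Q hQ)
end

section
/- Let R be a principal ideal domain such that R/m is a finite ring for every maximal ideal m of R. Then R has enough homogeneous polynomials: for every n ≥ 1 and every finite set S ⊆ R^n such that each tuple in S has coprime entries, there exists a nonconstant homogeneous polynomial f ∈ R[x_1, ..., x_n] such that f(X) is a unit of R for every X ∈ S. -/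
/-!
Tuples of `S` that are proportional differ by a unit factor, so one may assume that `S` is
pairwise non-proportional. Then products of linear forms separating the points of `S` show that
for some `c ≠ 0` every function `S → c R` is the restriction of a homogeneous form of any large
degree. The finitely many maximal ideals containing `c` have finite residue fields, each carrying
an anisotropic binary quadratic form `x² + xy + b y²`; lifting the `b`'s by the Chinese remainder
theorem and nesting the form over the variables gives a homogeneous `F` that vanishes modulo none
of them on unimodular tuples, so a power `F ^ k` is `≡ 1 (mod c)` there. Subtracting from `F ^ k`
a form that interpolates `F ^ k - 1` on `S` leaves a form equal to `1` on `S`.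
-/

open MvPolynomial

/-- A commutative ring `R` has enough homogeneous polynomials if for every `n ≥ 1`
and every finite set `S ⊆ R^n` whose tuples have coprime entries, there is a
nonconstant homogeneous polynomial taking unit values on `S`. -/
def HasEnoughHomogeneousPolynomials (R : Type*) [CommRing R] : Prop :=
  ∀ n : ℕ, 1 ≤ n → ∀ S : Finset (Fin n → R),
    (∀ Q ∈ S, Ideal.span (Set.range Q) = ⊤) →
    ∃ (f : MvPolynomial (Fin n) R) (d : ℕ), 1 ≤ d ∧ f.IsHomogeneous d ∧
      ∀ Q ∈ S, IsUnit (MvPolynomial.eval Q f)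

lemma exists_anisotropic_binary_form (K : Type*) [Field K] [Finite K] :
    ∃ b : K, ∀ x y : K, x * x + x * y + b * (y * y) = 0 → x = 0 ∧ y = 0 := by
  -- `t ↦ t * t + t` identifies `0` and `-1`, so it misses some value `c`.
  have hnotinj : ¬ Function.Injective fun t : K => t * t + t := fun h =>
    one_ne_zero (neg_eq_zero.mp (h (by ring : (-1 : K) * -1 + -1 = 0 * 0 + 0)))
  obtain ⟨c, hc⟩ : ∃ c, ∀ t : K, t * t + t ≠ c := by
    simpa [Function.Surjective] using mt Finite.injective_iff_surjective.mpr hnotinj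
  refine ⟨-c, fun x y hxy => ?_⟩
  by_cases hy : y = 0
  · subst hy
    exact ⟨mul_self_eq_zero.mp (by simpa using hxy), rfl⟩
  · refine absurd ?_ (hc (x / y))
    field_simp
    linear_combination hxy

section CommRing

variable {R : Type*} [CommRing R]

lemma exists_anisotropic_binary_form_mod {M : Set (Ideal R)} (hM : M.Finite)
    (hmax : ∀ m ∈ M, m.IsMaximal) (hfin : ∀ m ∈ M, Finite (R ⧸ m)) :
    ∃ b : R, ∀ m ∈ M, ∀ x y : R,
      x * x + x * y + b * (y * y) ∈ m → x ∈ m ∧ y ∈ m := by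
  have := hM.to_subtype
  have hK (m : M) : ∃ b : R ⧸ m.1, ∀ x y : R ⧸ m.1,
      x * x + x * y + b * (y * y) = 0 → x = 0 ∧ y = 0 := by
    have := hmax m m.2
    have := hfin m m.2
    let := Ideal.Quotient.field m.1
    exact exists_anisotropic_binary_form _
  choose b hb using hK
  have hcop : Pairwise (Function.onFun IsCoprime fun m : M => m.1) := fun m m' hne =>
    Ideal.isCoprime_iff_sup_eq.mpr <|
      (hmax m m.2).coprime_of_ne (hmax m' m'.2) (Subtype.coe_ne_coe.mpr hne)
  obtain ⟨r, hr⟩ := Ideal.pi_quotient_surjective hcop b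
  refine ⟨r, fun m hm x y hxy => ?_⟩
  have := hb ⟨m, hm⟩ _ _ <| by
    simpa [hr ⟨m, hm⟩] using Ideal.Quotient.eq_zero_iff_mem.mpr hxy
  simpa only [Ideal.Quotient.eq_zero_iff_mem] using this

lemma exists_isHomogeneous_eval_notMem {σ : Type*} {M : Set (Ideal R)}
    (hprime : ∀ m ∈ M, m.IsPrime) {b : R}
    (hb : ∀ m ∈ M, ∀ x y : R, x * x + x * y + b * (y * y) ∈ m → x ∈ m ∧ y ∈ m)
    {s : Finset σ} (hs : s.Nonempty) :
    ∃ d, 0 < d ∧ ∃ F : MvPolynomial σ R, F.IsHomogeneous d ∧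
      ∀ m ∈ M, ∀ v : σ → R, (∃ i ∈ s, v i ∉ m) → eval v F ∉ m := by
  induction hs using Finset.Nonempty.cons_induction with
  | singleton i =>
    refine ⟨1, one_pos, X i, isHomogeneous_X R i, fun m _ v hv => ?_⟩
    simpa using hv
  | cons i s hi hs ih =>
    obtain ⟨d, hd, F, hF, hFm⟩ := ih
    have hG : (X i ^ d : MvPolynomial σ R).IsHomogeneous d := by
      simpa using (isHomogeneous_X R i).pow d
    refine ⟨d + d, by omega, F * F + F * X i ^ d + C b * (X i ^ d * X i ^ d), ?_, ?_⟩
    · refine ((hF.mul hF).add (hF.mul hG)).add ?_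
      simpa using (isHomogeneous_C σ b).mul (hG.mul hG)
    · intro m hm v hv hmem
      obtain ⟨hFv, hXv⟩ := hb m hm _ _ (by simpa using hmem)
      obtain ⟨j, hj, hvj⟩ := hv
      rcases Finset.mem_cons.mp hj with rfl | hj
      · exact hvj ((hprime m hm).mem_of_pow_mem d hXv)
      · exact hFm m hm v ⟨j, hj, hvj⟩ hFv

lemma Ideal.finite_setOf_le_of_finite_quotient (I : Ideal R) [Finite (R ⧸ I)] :
    {m : Ideal R | I ≤ m}.Finite := by
  have : {m | Ideal.comap (Ideal.Quotient.mk I) ⊥ ≤ m}.Finite :=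
    .of_equiv _ (Ideal.relIsoOfSurjective _ Ideal.Quotient.mk_surjective).toEquiv
  simpa [← RingHom.ker_eq_comap_bot] using this

lemma Ideal.Quotient.isUnit_mk_of_forall_notMem {I : Ideal R} {x : R}
    (h : ∀ m : Ideal R, m.IsMaximal → I ≤ m → x ∉ m) :
    IsUnit (Ideal.Quotient.mk I x) := by
  have hsup : Ideal.span {x} ⊔ I = ⊤ := by
    by_contra hne
    obtain ⟨m, hm, hle⟩ := Ideal.exists_le_maximal _ hne
    exact h m hm (le_sup_right.trans hle)
      (hle (Ideal.mem_sup_left (Ideal.mem_span_singleton_self x)))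
  obtain ⟨a, i, hi, hai⟩ :=
    Ideal.mem_span_singleton_sup.mp (hsup ▸ Submodule.mem_top : (1 : R) ∈ _)
  refine IsUnit.of_mul_eq_one (Ideal.Quotient.mk I a) ?_
  rw [← map_mul, ← map_one (Ideal.Quotient.mk I), Ideal.Quotient.eq, ← hai]
  simpa [mul_comm] using I.neg_mem hi

lemma Ideal.Quotient.pow_card_units_sub_one_mem {I : Ideal R} [Finite (R ⧸ I)] {x : R}
    (hx : IsUnit (Ideal.Quotient.mk I x)) : x ^ Nat.card (R ⧸ I)ˣ - 1 ∈ I := by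
  obtain ⟨u, hu⟩ := hx
  rw [← Ideal.Quotient.eq, map_pow, map_one, ← hu, ← Units.val_pow_eq_pow_val,
    pow_card_eq_one', Units.val_one]

lemma exists_apply_notMem_of_span_range_eq_top {σ : Type*} {v : σ → R}
    (hv : Ideal.span (Set.range v) = ⊤) {m : Ideal R} (hm : m ≠ ⊤) : ∃ i, v i ∉ m := by
  by_contra! h
  exact hm (eq_top_iff.mpr (hv ▸ Ideal.span_le.mpr (Set.range_subset_iff.mpr h)))

lemma exists_isHomogeneous_mk_eval_eq_one {σ : Type*} [Fintype σ] [Nonempty σ] (I : Ideal R)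
    [Finite (R ⧸ I)] :
    ∃ d, 0 < d ∧ ∃ F : MvPolynomial σ R, F.IsHomogeneous d ∧
      ∀ v : σ → R, Ideal.span (Set.range v) = ⊤ → Ideal.Quotient.mk I (eval v F) = 1 := by
  set M := {m : Ideal R | m.IsMaximal ∧ I ≤ m}
  obtain ⟨b, hb⟩ := exists_anisotropic_binary_form_mod (M := M)
    ((I.finite_setOf_le_of_finite_quotient).subset fun m hm => hm.2) (fun m hm => hm.1)
    (fun m hm => .of_surjective _ (Ideal.Quotient.factor_surjective hm.2))
  obtain ⟨d, hd, F, hF, hFM⟩ :=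
    exists_isHomogeneous_eval_notMem (σ := σ) (fun m hm => hm.1.isPrime) hb Finset.univ_nonempty
  refine ⟨d * Nat.card (R ⧸ I)ˣ, Nat.mul_pos hd Nat.card_pos, F ^ Nat.card (R ⧸ I)ˣ,
    hF.pow _, fun v hv => ?_⟩
  have hunit : IsUnit (Ideal.Quotient.mk I (eval v F)) :=
    Ideal.Quotient.isUnit_mk_of_forall_notMem fun m hm hIm => by
      obtain ⟨i, hi⟩ := exists_apply_notMem_of_span_range_eq_top hv hm.ne_top
      exact hFM m ⟨hm, hIm⟩ v ⟨i, Finset.mem_univ i, hi⟩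
  rw [map_pow, ← map_one (Ideal.Quotient.mk I), Ideal.Quotient.eq]
  exact Ideal.Quotient.pow_card_units_sub_one_mem hunit

lemma isUnit_of_span_range_smul_eq_top {σ : Type*} {α : R} {P : σ → R}
    (h : Ideal.span (Set.range (α • P)) = ⊤) : IsUnit α := by
  refine Ideal.span_singleton_eq_top.mp (eq_top_iff.mpr (h ▸ Ideal.span_le.mpr ?_))
  rintro _ ⟨i, rfl⟩
  exact Ideal.mem_span_singleton.mpr ⟨P i, rfl⟩

lemma MvPolynomial.IsHomogeneous.eval_smul_s2 {σ : Type*} {f : MvPolynomial σ R} {d : ℕ}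
    (hf : f.IsHomogeneous d) (r : R) (v : σ → R) : eval (r • v) f = r ^ d * eval v f := by
  simp only [eval_eq, Finset.mul_sum, Pi.smul_apply, smul_eq_mul, mul_pow,
    Finset.prod_mul_distrib, Finset.prod_pow_eq_pow_sum]
  refine Finset.sum_congr rfl fun s hs => ?_
  rw [← hf (mem_support_iff.mp hs), Finsupp.weight_apply, Finsupp.sum]
  simp only [Pi.one_apply, smul_eq_mul, mul_one]
  ring

lemma exists_isHomogeneous_separating {σ : Type*} {P Q : σ → R}
    (hP : Ideal.span (Set.range P) = ⊤) (hQP : ∀ α : R, Q ≠ α • P) :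
    ∃ ℓ : MvPolynomial σ R, ℓ.IsHomogeneous 1 ∧ eval P ℓ = 0 ∧ eval Q ℓ ≠ 0 := by
  obtain ⟨a, ha, haP⟩ :=
    (Ideal.mem_span_iff_exists_isHomogeneous P 1).mp (hP ▸ Submodule.mem_top)
  obtain ⟨k, hk⟩ : ∃ k, Q k ≠ eval Q a * P k := by
    by_contra! h
    exact hQP (eval Q a) (funext fun k => by simpa using h k)
  refine ⟨X k - C (P k) * a, (isHomogeneous_X R k).sub ?_, by simp [haP], ?_⟩
  · simpa using (isHomogeneous_C σ (P k)).mul ha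
  · simpa [sub_eq_zero, mul_comm] using hk

end CommRing

section IsDomain

variable {R : Type*} [CommRing R] [IsDomain R] {σ : Type*}

lemma exists_isHomogeneous_eval_eq_and_vanishes_on {Q : σ → R}
    (hQ : Ideal.span (Set.range Q) = ⊤) (T : Finset (σ → R))
    (hT : ∀ P ∈ T, Ideal.span (Set.range P) = ⊤ ∧ ∀ α : R, Q ≠ α • P) :
    ∃ c ≠ 0, ∀ D, T.card ≤ D → ∃ b : MvPolynomial σ R,
      b.IsHomogeneous D ∧ eval Q b = c ∧ ∀ P ∈ T, eval P b = 0 := by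
  classical
  induction T using Finset.induction_on with
  | empty =>
    refine ⟨1, one_ne_zero, fun D _ => ?_⟩
    obtain ⟨b, hb, hbQ⟩ := (Ideal.mem_span_pow_iff_exists_isHomogeneous Q 1).mp
      (by simp [hQ, Ideal.top_pow] : (1 : R) ∈ Ideal.span (Set.range Q) ^ D)
    exact ⟨b, hb, hbQ, by simp⟩
  | insert P T hPT ih =>
    obtain ⟨c, hc, hcb⟩ := ih fun P' hP' => hT P' (Finset.mem_insert_of_mem hP')
    obtain ⟨hP, hQP⟩ := hT P (Finset.mem_insert_self P T)
    obtain ⟨ℓ, hℓ, hℓP, hℓQ⟩ := exists_isHomogeneous_separating hP hQP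
    refine ⟨eval Q ℓ * c, mul_ne_zero hℓQ hc, fun D hD => ?_⟩
    rw [Finset.card_insert_of_notMem hPT] at hD
    obtain ⟨b, hb, hbQ, hbT⟩ := hcb (D - 1) (by omega)
    refine ⟨ℓ * b, by simpa [show 1 + (D - 1) = D by omega] using hℓ.mul hb,
      by simp [hbQ], ?_⟩
    simp only [Finset.mem_insert, forall_eq_or_imp, map_mul]
    exact ⟨by simp [hℓP], fun P' hP' => by simp [hbT P' hP']⟩

lemma exists_isHomogeneous_interpolating (S : Finset (σ → R))
    (hS : ∀ Q ∈ S, Ideal.span (Set.range Q) = ⊤)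
    (hsep : ∀ P ∈ S, ∀ Q ∈ S, P ≠ Q → ∀ α : R, Q ≠ α • P) :
    ∃ c ≠ 0, ∀ D, S.card - 1 ≤ D → ∀ t : (σ → R) → R,
      (∀ Q ∈ S, t Q ∈ Ideal.span {c}) →
      ∃ g : MvPolynomial σ R, g.IsHomogeneous D ∧ ∀ Q ∈ S, eval Q g = t Q := by
  classical
  have hA (Q) (hQ : Q ∈ S) := exists_isHomogeneous_eval_eq_and_vanishes_on (hS Q hQ)
    (S.erase Q) fun P hP =>
      ⟨hS P (Finset.mem_of_mem_erase hP),
        hsep P (Finset.mem_of_mem_erase hP) Q hQ (Finset.ne_of_mem_erase hP)⟩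
  choose! c hc0 hc using hA
  refine ⟨∏ Q ∈ S, c Q, Finset.prod_ne_zero_iff.mpr hc0, fun D hD t ht => ?_⟩
  have hb (Q) (hQ : Q ∈ S) : ∃ b : MvPolynomial σ R, b.IsHomogeneous D ∧ eval Q b = c Q ∧
      ∀ P ∈ S.erase Q, eval P b = 0 :=
    hc Q hQ D (by rwa [Finset.card_erase_of_mem hQ])
  choose! b hb using hb
  choose! s hs using fun Q hQ => Ideal.mem_span_singleton'.mp (ht Q hQ)
  refine ⟨∑ Q ∈ S, C (s Q * ∏ P ∈ S.erase Q, c P) * b Q,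
    IsHomogeneous.sum _ _ _ fun Q hQ => ?_, fun Q hQ => ?_⟩
  · simpa only [zero_add] using
      (isHomogeneous_C σ (s Q * ∏ P ∈ S.erase Q, c P)).mul (hb Q hQ).1
  · rw [map_sum, Finset.sum_eq_single_of_mem Q hQ]
    · simp [(hb Q hQ).2.1, mul_assoc, Finset.prod_erase_mul _ _ hQ, hs Q hQ]
    · intro P hP hPQ
      simp [(hb P hP).2.2 Q (Finset.mem_erase.mpr ⟨hPQ.symm, hQ⟩)]

end IsDomain

theorem Ring.HasFiniteQuotients.of_isDedekindDomain {R : Type*} [CommRing R]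
    [IsDedekindDomain R]
    (hfin : ∀ m : Ideal R, m.IsMaximal → Finite (R ⧸ m)) : Ring.HasFiniteQuotients R where
  finiteQuotient {I} hI := by
    induction I using UniqueFactorizationMonoid.induction_on_prime with
    | h₁ => exact absurd Ideal.zero_eq_bot hI
    | h₂ J hJ =>
      rw [Ideal.isUnit_iff.mp hJ]
      infer_instance
    | h₃ J p hJ hp ih =>
      have := hfin p ((Ideal.isPrime_of_prime hp).isMaximal hp.ne_zero)
      have := ih hJ
      exact Submodule.finite_quotient_smul p (IsNoetherian.noetherian J)

section HasFiniteQuotients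

variable {R : Type*} [CommRing R] [IsDomain R] [Ring.HasFiniteQuotients R]
  {σ : Type*} [Fintype σ] [Nonempty σ]

theorem exists_isHomogeneous_isUnit_eval_of_pairwise (S : Finset (σ → R))
    (hS : ∀ Q ∈ S, Ideal.span (Set.range Q) = ⊤)
    (hsep : ∀ P ∈ S, ∀ Q ∈ S, P ≠ Q → ∀ α : R, Q ≠ α • P) :
    ∃ (f : MvPolynomial σ R) (d : ℕ), 1 ≤ d ∧ f.IsHomogeneous d ∧
      ∀ Q ∈ S, IsUnit (eval Q f) := by
  obtain ⟨c, hc, hinterp⟩ := exists_isHomogeneous_interpolating S hS hsep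
  have := Ring.HasFiniteQuotients.finiteQuotient (I := Ideal.span {c}) (by simpa using hc)
  obtain ⟨d, hd, F, hF, hF1⟩ :=
    exists_isHomogeneous_mk_eval_eq_one (σ := σ) (Ideal.span {c})
  set k := S.card + 1
  obtain ⟨g, hg, hgS⟩ := hinterp (d * k) ((Nat.sub_le _ 1).trans
      ((Nat.le_succ _).trans (Nat.le_mul_of_pos_left k hd)))
    (fun Q => eval Q (F ^ k) - 1) fun Q hQ =>
      Ideal.Quotient.eq.mp (by rw [map_one, map_pow, map_pow, hF1 Q (hS Q hQ), one_pow])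
  refine ⟨F ^ k - g, d * k, Nat.mul_pos hd S.card.succ_pos, (hF.pow k).sub hg, fun Q hQ => ?_⟩
  simp [hgS Q hQ]

theorem exists_isHomogeneous_isUnit_eval (S : Finset (σ → R))
    (hS : ∀ Q ∈ S, Ideal.span (Set.range Q) = ⊤) :
    ∃ (f : MvPolynomial σ R) (d : ℕ), 1 ≤ d ∧ f.IsHomogeneous d ∧
      ∀ Q ∈ S, IsUnit (eval Q f) := by
  classical
  induction S using Finset.strongInduction with | _ S ih =>
  by_cases hprop : ∃ P ∈ S, ∃ Q ∈ S, P ≠ Q ∧ ∃ α : R, Q = α • P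
  · obtain ⟨P, hP, _, hQ, hPQ, α, rfl⟩ := hprop
    obtain ⟨f, d, hd, hf, hfS⟩ := ih (S.erase (α • P)) (Finset.erase_ssubset hQ)
      fun Q hQ => hS Q (Finset.mem_of_mem_erase hQ)
    refine ⟨f, d, hd, hf, fun Q hQ' => ?_⟩
    by_cases hQα : Q = α • P
    · subst hQα
      rw [hf.eval_smul_s2]
      exact ((isUnit_of_span_range_smul_eq_top (hS _ hQ)).pow d).mul
        (hfS P (Finset.mem_erase.mpr ⟨hPQ, hP⟩))
    · exact hfS Q (Finset.mem_erase.mpr ⟨hQα, hQ'⟩)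
  · push Not at hprop
    exact exists_isHomogeneous_isUnit_eval_of_pairwise S hS hprop

end HasFiniteQuotients

/-- A PID all of whose quotients by maximal ideals are finite has enough
homogeneous polynomials. -/
theorem pid_hasEnoughHomogeneousPolynomials (R : Type*) [CommRing R] [IsDomain R]
    [IsPrincipalIdealRing R]
    (hfin : ∀ m : Ideal R, m.IsMaximal → Finite (R ⧸ m)) :
    HasEnoughHomogeneousPolynomials R := by
  have := Ring.HasFiniteQuotients.of_isDedekindDomain hfin
  intro n hn S hS
  have : Nonempty (Fin n) := ⟨⟨0, hn⟩⟩
  exact exists_isHomogeneous_isUnit_eval S hS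
end

section
/- Let R be a commutative ring and I ⊆ R a nilpotent ideal. If the quotient ring R/I has enough homogeneous polynomials, then R has enough homogeneous polynomials. -/
theorem Ideal.span_range_comp_eq_top {R S ι : Type*} [Semiring R] [Semiring S] (φ : R →+* S)
    {Q : ι → R} (hQ : Ideal.span (Set.range Q) = ⊤) : Ideal.span (Set.range (φ ∘ Q)) = ⊤ := by
  rw [Set.range_comp, ← Ideal.map_span, hQ, Ideal.map_top]

theorem Ideal.isLocalHom_mk_of_pow_eq_bot {R : Type*} [CommRing R] {I : Ideal R} {k : ℕ}
    (hI : I ^ k = ⊥) : IsLocalHom (Ideal.Quotient.mk I) := by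
  have hI_nil : I ≤ (⊥ : Ideal R).radical := fun x hx =>
    ⟨k, by simpa [hI] using Ideal.pow_mem_pow hx k⟩
  exact isLocalHom_of_le_jacobson_bot I (hI_nil.trans Ideal.radical_le_jacobson)

namespace MvPolynomial

variable {σ R S : Type*} [CommSemiring R] [CommSemiring S]

theorem map_homogeneousComponent (φ : R →+* S) (d : ℕ) (f : MvPolynomial σ R) :
    map φ (homogeneousComponent d f) = homogeneousComponent d (map φ f) := by
  ext m
  simp only [coeff_map, coeff_homogeneousComponent]
  split_ifs <;> simp

theorem exists_isHomogeneous_map_eq {φ : R →+* S} (hφ : Function.Surjective φ)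
    {g : MvPolynomial σ S} {d : ℕ} (hg : g.IsHomogeneous d) :
    ∃ f : MvPolynomial σ R, f.IsHomogeneous d ∧ map φ f = g := by
  obtain ⟨f, rfl⟩ := map_surjective φ hφ g
  exact ⟨homogeneousComponent d f, homogeneousComponent_isHomogeneous d f,
    by rw [map_homogeneousComponent, homogeneousComponent_of_mem hg, if_pos rfl]⟩

end MvPolynomial

theorem HasEnoughHomogeneousPolynomials.of_surjective {R S : Type*} [CommRing R] [CommRing S]
    (φ : R →+* S) [IsLocalHom φ] (hφ : Function.Surjective φ)
    (h : HasEnoughHomogeneousPolynomials S) : HasEnoughHomogeneousPolynomials R := by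
  classical
  intro n hn T hT
  obtain ⟨g, d, hd, hg, hg_unit⟩ := h n hn (T.image (φ ∘ ·)) <| by
    simpa using fun Q hQ => Ideal.span_range_comp_eq_top φ (hT Q hQ)
  obtain ⟨f, hf, rfl⟩ := MvPolynomial.exists_isHomogeneous_map_eq hφ hg
  refine ⟨f, d, hd, hf, fun Q hQ => ?_⟩
  rw [← isUnit_map_iff φ, MvPolynomial.map_eval]
  exact hg_unit _ (Finset.mem_image_of_mem _ hQ)

/-- If `I` is a nilpotent ideal of `R` and `R/I` has enough homogeneous
polynomials, then so does `R`. -/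
theorem hasEnoughHomogeneousPolynomials_of_quotient_nilpotent
    (R : Type*) [CommRing R] (I : Ideal R) (hI : ∃ k : ℕ, 1 ≤ k ∧ I ^ k = ⊥)
    (h : HasEnoughHomogeneousPolynomials (R ⧸ I)) :
    HasEnoughHomogeneousPolynomials R := by
  obtain ⟨k, -, hk⟩ := hI
  have := Ideal.isLocalHom_mk_of_pow_eq_bot hk
  exact h.of_surjective (Ideal.Quotient.mk I) Ideal.Quotient.mk_surjective
end

section
/- Every local Artinian commutative ring has enough homogeneous polynomials. -/
open MvPolynomial IsLocalRing

/-- Every local Artinian commutative ring has enough homogeneous polynomials. -/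
theorem localArtinian_hasEnoughHomogeneousPolynomials
    (R : Type*) [CommRing R] [IsArtinianRing R] [IsLocalRing R] :
    HasEnoughHomogeneousPolynomials R := by
  classical
  intro n hn S hS
  -- the maximal ideal is nilpotent
  obtain ⟨N₀, hN₀⟩ := IsArtinianRing.isNilpotent_jacobson_bot (R := R)
  rw [IsLocalRing.jacobson_eq_maximalIdeal ⊥ bot_ne_top] at hN₀
  set N : ℕ := N₀ + 1 with hNdef
  have hN1 : 1 ≤ N := by omega
  have hnil : ∀ a : R, ¬ IsUnit a → ∀ M : ℕ, N ≤ M → a ^ M = 0 := by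
    intro a ha M hM
    have ham : a ∈ maximalIdeal R := (IsLocalRing.mem_maximalIdeal a).mpr ha
    have h1 : a ^ M ∈ (maximalIdeal R) ^ M := Ideal.pow_mem_pow ham M
    have h2 : (maximalIdeal R : Ideal R) ^ M ≤ (maximalIdeal R) ^ N₀ :=
      Ideal.pow_le_pow_right (by omega)
    have := h2 h1
    rw [hN₀] at this
    simpa using this
  have hres : ∀ a : R, residue R a ≠ 0 ↔ IsUnit a := by
    intro a
    constructor
    · intro h
      by_contra hu
      exact h (Ideal.Quotient.eq_zero_iff_mem.mpr ((IsLocalRing.mem_maximalIdeal a).mpr hu))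
    · intro hu h
      have := Ideal.Quotient.eq_zero_iff_mem.mp h
      rw [IsLocalRing.mem_maximalIdeal, mem_nonunits_iff] at this
      exact this hu
  have hcoord : ∀ P : Fin n → R, Ideal.span (Set.range P) = ⊤ → ∃ i, IsUnit (P i) := by
    intro P hP
    by_contra h
    push_neg at h
    have hle : Ideal.span (Set.range P) ≤ maximalIdeal R := by
      rw [Ideal.span_le]
      rintro _ ⟨i, rfl⟩
      exact (IsLocalRing.mem_maximalIdeal _).mpr (h i)
    rw [hP] at hle
    exact (IsLocalRing.maximalIdeal.isMaximal R).ne_top (top_le_iff.mp hle)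
  revert hS
  induction S using Finset.induction_on with
  | empty =>
    intro _
    exact ⟨X ⟨0, hn⟩, 1, le_refl 1, isHomogeneous_X R _,
      fun Q hQ => absurd hQ (Finset.notMem_empty Q)⟩
  | @insert Q S' hQS ih =>
    intro hS
    obtain ⟨f, d, hd, hfh, hfu⟩ := ih (fun P hP => hS P (Finset.mem_insert_of_mem hP))
    obtain ⟨i, hQi⟩ := hcoord Q (hS Q (Finset.mem_insert_self Q S'))
    have hor : ∀ P ∈ insert Q S', IsUnit (eval P f) ∨ IsUnit (P i) := by
      intro P hP
      rcases Finset.mem_insert.mp hP with rfl | hP'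
      · exact Or.inr hQi
      · exact Or.inl (hfu P hP')
    cases finite_or_infinite (ResidueField R) with
    | inl hfin =>
      have : Fintype (ResidueField R) := Fintype.ofFinite _
      set q := Fintype.card (ResidueField R) with hqdef
      have hq : 2 ≤ q := Fintype.one_lt_card
      set M : ℕ := N * (q - 1) with hMdef
      have hNM : N ≤ M := Nat.le_mul_of_pos_right N (by omega)
      have hMdM : M ≤ d * M := Nat.le_mul_of_pos_left M (by omega)
      have hNdM : N ≤ d * M := le_trans hNM hMdM
      have hN2M : N ≤ 2 * M := le_trans hNM (by omega)
      have hN2dM : N ≤ 2 * (d * M) := le_trans hNdM (by omega)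
      have hunitpow : ∀ (a : R) (E : ℕ), (q - 1) ∣ E → IsUnit a → residue R (a ^ E) = 1 := by
        rintro a E ⟨t, rfl⟩ ha
        rw [map_pow, pow_mul, FiniteField.pow_card_sub_one_eq_one _ ((hres a).mpr ha), one_pow]
      have key : ∀ u v : R, IsUnit u ∨ IsUnit v →
          IsUnit (u ^ (2 * M) + v ^ (2 * (d * M)) - u ^ M * v ^ (d * M)) := by
        intro u v huv
        by_cases hu : IsUnit u <;> by_cases hv : IsUnit v
        · apply (hres _).mp
          rw [map_sub, map_add, map_mul,
            hunitpow u (2 * M) ⟨N * 2, by rw [hMdef]; ring⟩ hu,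
            hunitpow v (2 * (d * M)) ⟨N * (2 * d), by rw [hMdef]; ring⟩ hv,
            hunitpow u M ⟨N, by rw [hMdef]; ring⟩ hu,
            hunitpow v (d * M) ⟨N * d, by rw [hMdef]; ring⟩ hv]
          norm_num
        · rw [hnil v hv (2 * (d * M)) hN2dM, hnil v hv (d * M) hNdM, mul_zero, sub_zero,
            add_zero]
          exact hu.pow _
        · rw [hnil u hu (2 * M) hN2M, hnil u hu M hNM, zero_mul, sub_zero, zero_add]
          exact hv.pow _
        · tauto
      have h1 : (f ^ (2 * M)).IsHomogeneous (2 * (d * M)) := by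
        have := hfh.pow (2 * M); rwa [show d * (2 * M) = 2 * (d * M) by ring] at this
      have h2 : ((X i : MvPolynomial (Fin n) R) ^ (2 * (d * M))).IsHomogeneous (2 * (d * M)) := by
        have := (isHomogeneous_X R i).pow (2 * (d * M)); rwa [one_mul] at this
      have h3 : (f ^ M * (X i : MvPolynomial (Fin n) R) ^ (d * M)).IsHomogeneous (2 * (d * M)) := by
        have := (hfh.pow M).mul ((isHomogeneous_X R i).pow (d * M))
        rwa [show d * M + 1 * (d * M) = 2 * (d * M) by ring] at this
      refine ⟨f ^ (2 * M) + (X i) ^ (2 * (d * M)) - f ^ M * (X i) ^ (d * M), 2 * (d * M),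
        ?_, (h1.add h2).sub h3, ?_⟩
      · have h1dM : 1 ≤ d * M := le_trans hN1 hNdM
        omega
      · intro P hP
        have := key (eval P f) (P i) (hor P hP)
        simpa only [map_sub, map_add, map_mul, map_pow, eval_X] using this
    | inr hinf =>
      set D : ℕ := d * N with hDdef
      have hND : N ≤ D := Nat.le_mul_of_pos_left N (by omega)
      have hD1 : 1 ≤ D := le_trans hN1 hND
      obtain ⟨z, hz⟩ := Infinite.exists_notMem_finset
        ((insert Q S').image
          (fun P => -(residue R (eval P f)) ^ N * ((residue R (P i)) ^ D)⁻¹))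
      obtain ⟨c, rfl⟩ := IsLocalRing.residue_surjective z
      have h1 : (f ^ N).IsHomogeneous D := by
        have := hfh.pow N; rwa [← hDdef] at this
      have h2 : ((C c : MvPolynomial (Fin n) R) * (X i) ^ D).IsHomogeneous D := by
        have := (isHomogeneous_C (Fin n) c).mul ((isHomogeneous_X R i).pow D)
        rwa [zero_add, one_mul] at this
      refine ⟨f ^ N + C c * (X i) ^ D, D, hD1, h1.add h2, ?_⟩
      intro P hP
      have hev : eval P (f ^ N + C c * (X i) ^ D) = eval P f ^ N + c * (P i) ^ D := by
        simp [map_add, map_mul, map_pow]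
      rw [hev]
      by_cases hw : IsUnit (P i)
      · apply (hres _).mp
        intro h0
        rw [map_add, map_mul, map_pow, map_pow] at h0
        apply hz
        have hw0 : residue R (P i) ≠ 0 := (hres _).mpr hw
        have hwD : (residue R (P i)) ^ D ≠ 0 := pow_ne_zero _ hw0
        have hc : residue R c = -(residue R (eval P f)) ^ N * ((residue R (P i)) ^ D)⁻¹ := by
          field_simp
          linear_combination h0
        rw [hc]
        exact Finset.mem_image.mpr ⟨P, hP, rfl⟩
      · rw [hnil (P i) hw D hND, mul_zero, add_zero]
        exact ((hor P hP).resolve_right hw).pow N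
end

section
/- For every integer a ≥ 1, the ring ℤ/aℤ has enough homogeneous polynomials: for every n ≥ 1 and every finite set S ⊆ (ℤ/aℤ)^n such that each tuple in S has coprime entries, there exists a nonconstant homogeneous polynomial f ∈ (ℤ/aℤ)[x_1, ..., x_n] such that f(X) is a unit of ℤ/aℤ for every X ∈ S. -/
private lemma aux_idem_of_cycle {R : Type*} [CommMonoid R] (x : R) (i c : ℕ) (hc : 1 ≤ c)
    (h : x ^ (i + c) = x ^ i) : ∃ m, 1 ≤ m ∧ IsIdempotentElem (x ^ m) := by
  have hstep : ∀ s, i ≤ s → x ^ (s + c) = x ^ s := by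
    intro s hs
    rw [show s + c = (i + c) + (s - i) by omega, pow_add, h, ← pow_add,
      show i + (s - i) = s by omega]
  have hsteps : ∀ t s, i ≤ s → x ^ (s + t * c) = x ^ s := by
    intro t
    induction t with
    | zero => simp
    | succ t iht =>
      intro s hs
      rw [show s + (t + 1) * c = (s + t * c) + c by ring,
        hstep _ (le_trans hs (Nat.le_add_right _ _)), iht s hs]
  have hle : i ≤ (i + 1) * c := by nlinarith
  refine ⟨(i + 1) * c, Nat.one_le_iff_ne_zero.mpr (by positivity), ?_⟩
  show x ^ ((i + 1) * c) * x ^ ((i + 1) * c) = x ^ ((i + 1) * c)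
  rw [← pow_add]
  exact hsteps (i + 1) ((i + 1) * c) hle


private lemma exists_idem_pow (R : Type*) [CommMonoid R] [Finite R] :
    ∃ M : ℕ, 1 ≤ M ∧ ∀ x : R, IsIdempotentElem (x ^ M) := by
  cases nonempty_fintype R
  have key : ∀ x : R, ∃ m : ℕ, 1 ≤ m ∧ IsIdempotentElem (x ^ m) := by
    intro x
    obtain ⟨i, j, hij, hpow⟩ := Finite.exists_ne_map_eq_of_infinite (fun n : ℕ => x ^ n)
    rcases lt_or_gt_of_ne hij with hlt | hlt
    · exact aux_idem_of_cycle x i (j - i) (by omega)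
        (by rw [show i + (j - i) = j by omega]; exact hpow.symm)
    · exact aux_idem_of_cycle x j (i - j) (by omega)
        (by rw [show j + (i - j) = i by omega]; exact hpow)
  choose m hm1 hm2 using key
  refine ⟨∏ x : R, m x, ?_, ?_⟩
  · exact Finset.one_le_prod' (fun x _ => hm1 x)
  · intro x
    obtain ⟨k, hk⟩ := Finset.dvd_prod_of_mem m (Finset.mem_univ x)
    rw [hk, pow_mul]
    exact (hm2 x).pow k

theorem zmod_aux (a : ℕ) [NeZero a] (M : ℕ) (hM1 : 1 ≤ M)
    (hMid : ∀ x : ZMod a, IsIdempotentElem (x ^ M))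
    (n : ℕ) (hn : 1 ≤ n) (S : Finset (Fin n → ZMod a)) :
    (∀ Q ∈ S, Ideal.span (Set.range Q) = ⊤) →
    ∃ (f : MvPolynomial (Fin n) (ZMod a)) (d : ℕ), 1 ≤ d ∧ f.IsHomogeneous d ∧
      ∀ Q ∈ S, MvPolynomial.eval Q f = 1 := by
  induction S using Finset.induction with
  | empty =>
    intro _
    exact ⟨MvPolynomial.X ⟨0, by omega⟩, 1, le_refl 1, MvPolynomial.isHomogeneous_X _ _,
      by simp⟩
  | @insert Q s hQs ih =>
    intro hS
    obtain ⟨f, d, hd, hf, hf1⟩ := ih (fun Q' hQ' => hS Q' (Finset.mem_insert_of_mem hQ'))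
    have hQtop := hS Q (Finset.mem_insert_self Q s)
    have h1 : (1 : ZMod a) ∈ Ideal.span (Set.range Q) := hQtop ▸ Submodule.mem_top
    rw [Ideal.span, Submodule.mem_span_range_iff_exists_fun] at h1
    obtain ⟨c, hc⟩ := h1
    set L : MvPolynomial (Fin n) (ZMod a) := ∑ i, MvPolynomial.C (c i) * MvPolynomial.X i
      with hLdef
    have hLhom : L.IsHomogeneous 1 := by
      apply MvPolynomial.IsHomogeneous.sum
      intro i _
      simpa using (MvPolynomial.isHomogeneous_C _ (c i)).mul (MvPolynomial.isHomogeneous_X _ i)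
    have hLQ : MvPolynomial.eval Q L = 1 := by
      rw [hLdef, map_sum]
      simpa [smul_eq_mul] using hc
    refine ⟨f ^ (2 * M) + L ^ (2 * (d * M)) - f ^ M * L ^ (d * M), 2 * (d * M),
      Nat.one_le_iff_ne_zero.mpr (by positivity), ?_, ?_⟩
    · apply MvPolynomial.IsHomogeneous.sub
      · apply MvPolynomial.IsHomogeneous.add
        · have := hf.pow (2 * M)
          convert this using 1
          ring
        · have := hLhom.pow (2 * (d * M))
          convert this using 1
          ring
      · have := (hf.pow M).mul (hLhom.pow (d * M))
        convert this using 1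
        ring
    · intro Q' hQ'
      rcases Finset.mem_insert.mp hQ' with rfl | hQ's
      · simp only [map_sub, map_add, map_pow, map_mul, hLQ, one_pow, mul_one]
        set y := MvPolynomial.eval Q' f
        have hy : y ^ (2 * M) = y ^ M := by
          rw [two_mul, pow_add]; exact hMid y
        rw [hy]; ring
      · simp only [map_sub, map_add, map_pow, map_mul, hf1 Q' hQ's, one_pow, one_mul]
        set z := MvPolynomial.eval Q' L
        have hzd : z ^ (d * M) = z ^ M := by
          obtain ⟨k, rfl⟩ : ∃ k, d = k + 1 := ⟨d - 1, by omega⟩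
          rw [show (k + 1) * M = M * (k + 1) by ring, pow_mul,
            IsIdempotentElem.pow_succ_eq k (hMid z)]
        have hz2 : z ^ (2 * (d * M)) = z ^ (d * M) := by
          rw [two_mul, pow_add, hzd]
          exact hMid z
        rw [hz2]; ring

/-- For every `a ≥ 1`, the ring `ℤ/aℤ` has enough homogeneous polynomials. -/
theorem zmod_hasEnoughHomogeneousPolynomials (a : ℕ) (ha : 1 ≤ a)
    (n : ℕ) (hn : 1 ≤ n) (S : Finset (Fin n → ZMod a))
    (hS : ∀ Q ∈ S, Ideal.span (Set.range Q) = ⊤) :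
    ∃ (f : MvPolynomial (Fin n) (ZMod a)) (d : ℕ), 1 ≤ d ∧ f.IsHomogeneous d ∧
      ∀ Q ∈ S, IsUnit (MvPolynomial.eval Q f) := by
  haveI : NeZero a := ⟨by omega⟩
  obtain ⟨M, hM1, hMid⟩ := exists_idem_pow (ZMod a)
  obtain ⟨f, d, h1, h2, h3⟩ := zmod_aux a M hM1 hMid n hn S hS
  exact ⟨f, d, h1, h2, fun Q hQ => (h3 Q hQ) ▸ isUnit_one⟩
end

section
/- Let R be an integral domain such that: (i) for every nonzero element a ∈ R, the quotient ring R/(a) has enough homogeneous polynomials, and (ii) for every ideal I of R, the cokernel of the natural map of unit groups R^× → (R/I)^× is a torsion group. Then R has enough homogeneous polynomials. -/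
open MvPolynomial

namespace MvPolynomial.IsHomogeneous

variable {σ R : Type*} [CommSemiring R] {φ : MvPolynomial σ R} {d : ℕ}

theorem eval_smul_s9 (hφ : φ.IsHomogeneous d) (c : R) (x : σ → R) :
    eval (c • x) φ = c ^ d * eval x φ := by
  rw [eval_eq, eval_eq, Finset.mul_sum]
  refine Finset.sum_congr rfl fun u hu => ?_
  simp only [Pi.smul_apply, smul_eq_mul, mul_pow, Finset.prod_mul_distrib,
    Finset.prod_pow_eq_pow_sum, ← hφ.degree_eq_sum_deg_support hu]
  ring

theorem exists_map_eq_of_surjective {S : Type*} [CommSemiring S] {f : R →+* S}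
    (hf : Function.Surjective f) {ψ : MvPolynomial σ S} (hψ : ψ.IsHomogeneous d) :
    ∃ φ : MvPolynomial σ R, φ.IsHomogeneous d ∧ map f φ = ψ := by
  obtain ⟨φ, rfl⟩ := map_surjective f hf ψ
  refine ⟨homogeneousComponent d φ, homogeneousComponent_isHomogeneous d φ, ?_⟩
  ext u
  rw [coeff_map, coeff_homogeneousComponent]
  split_ifs with h
  · rw [coeff_map]
  · rw [map_zero, hψ.coeff_eq_zero h]

end MvPolynomial.IsHomogeneous

theorem Subgroup.exists_common_pow_mem {G ι : Type*} [Group G] {H : Subgroup G}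
    (s : Finset ι) (g : ι → G) (h : ∀ i ∈ s, ∃ k, 1 ≤ k ∧ g i ^ k ∈ H) :
    ∃ k, 1 ≤ k ∧ ∀ i ∈ s, g i ^ k ∈ H := by
  choose! k hk hkg using h
  refine ⟨∏ i ∈ s, k i, Finset.one_le_prod' hk, fun i hi => ?_⟩
  obtain ⟨c, hc⟩ := Finset.dvd_prod_of_mem k hi
  rw [hc, pow_mul]
  exact pow_mem (hkg i hi) c

theorem MulAction.exists_subset_pairwise_notMem_orbit {G α : Type*} [Group G] [MulAction G α]
    (S : Finset α) : ∃ T ⊆ S, (∀ y ∈ S, ∃ x ∈ T, ∃ g : G, g • x = y) ∧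
      (T : Set α).Pairwise fun x y => ∀ g : G, g • x ≠ y := by
  classical
  obtain ⟨T, hTS, hinj, himg⟩ := Finset.exists_subset_injOn_image_eq_of_surjOn
    (f := orbit G) S (S.image (orbit G)) (by rw [Finset.coe_image]; exact Set.surjOn_image _ _)
  refine ⟨T, by exact_mod_cast hTS, fun y hy => ?_, fun x hx y hy hxy g hg => hxy (hinj hx hy ?_)⟩
  · obtain ⟨x, hx, hxy⟩ := Finset.mem_image.mp (himg ▸ Finset.mem_image_of_mem (orbit G) hy)
    exact ⟨x, hx, mem_orbit_iff.mp (by rw [hxy]; exact mem_orbit_self y)⟩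
  · exact (orbit_eq_iff.mpr ⟨g, hg⟩).symm

theorem Ideal.exists_units_sub_pow_mem {R ι : Type*} [CommRing R] {I : Ideal R}
    (htors : ∀ u : (R ⧸ I)ˣ, ∃ k : ℕ, 1 ≤ k ∧
      u ^ k ∈ (Units.map (Ideal.Quotient.mk I).toMonoidHom).range)
    (s : Finset ι) {r : ι → R} (hr : ∀ i ∈ s, IsUnit (Ideal.Quotient.mk I (r i))) :
    ∃ k, 1 ≤ k ∧ ∀ i ∈ s, ∃ v : Rˣ, (v : R) - r i ^ k ∈ I := by
  choose! w hw using hr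
  obtain ⟨k, hk, hkw⟩ := Subgroup.exists_common_pow_mem s w fun i _ => htors (w i)
  refine ⟨k, hk, fun i hi => ?_⟩
  obtain ⟨v, hv⟩ := hkw i hi
  refine ⟨v, Ideal.Quotient.eq.mp ?_⟩
  simpa [hw i hi] using congrArg Units.val hv

section CoprimePoints

variable {σ R : Type*} [Fintype σ] [CommRing R] {x y : σ → R}

theorem exists_isHomogeneous_one_eval_eq_one (hx : Ideal.span (Set.range x) = ⊤) :
    ∃ L : MvPolynomial σ R, L.IsHomogeneous 1 ∧ eval x L = 1 := by
  obtain ⟨c, hc⟩ := Ideal.mem_span_range_iff_exists_fun.mp (hx ▸ Submodule.mem_top (x := 1))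
  refine ⟨∑ i, C (c i) * X i, IsHomogeneous.sum _ _ _ fun i _ => isHomogeneous_C_mul_X _ _, ?_⟩
  simpa only [map_sum, map_mul, eval_C, eval_X] using hc

theorem exists_units_smul_eq_of_mul_eq_mul (hx : Ideal.span (Set.range x) = ⊤)
    (hy : Ideal.span (Set.range y) = ⊤) (h : ∀ i j, x i * y j = x j * y i) :
    ∃ u : Rˣ, u • x = y := by
  obtain ⟨c, hc⟩ := Ideal.mem_span_range_iff_exists_fun.mp (hx ▸ Submodule.mem_top (x := 1))
  obtain ⟨e, he⟩ := Ideal.mem_span_range_iff_exists_fun.mp (hy ▸ Submodule.mem_top (x := 1))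
  set t := ∑ i, c i * y i
  have hyx : y = t • x := funext fun j => by
    calc y j = (∑ i, c i * x i) * y j := by rw [hc, one_mul]
      _ = t * x j := by
        rw [Finset.sum_mul, Finset.sum_mul]
        exact Finset.sum_congr rfl fun i _ => by rw [mul_assoc, h i j]; ring
  have ht : IsUnit t := IsUnit.of_mul_eq_one (∑ i, e i * x i) <| by
    calc t * ∑ i, e i * x i = ∑ i, e i * (t • x) i := by
          rw [Finset.mul_sum]
          exact Finset.sum_congr rfl fun i _ => by rw [Pi.smul_apply, smul_eq_mul]; ring
      _ = 1 := by rw [← hyx, he]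
  exact ⟨ht.unit, by rw [Units.smul_def, ht.unit_spec, hyx]⟩

theorem exists_isHomogeneous_one_eval_eq_zero_eval_ne_zero (hx : Ideal.span (Set.range x) = ⊤)
    (hy : Ideal.span (Set.range y) = ⊤) (hxy : ∀ u : Rˣ, u • x ≠ y) :
    ∃ Z : MvPolynomial σ R, Z.IsHomogeneous 1 ∧ eval y Z = 0 ∧ eval x Z ≠ 0 := by
  obtain ⟨i, j, hij⟩ : ∃ i j, x i * y j ≠ x j * y i := by
    by_contra! h
    obtain ⟨u, hu⟩ := exists_units_smul_eq_of_mul_eq_mul hx hy h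
    exact hxy u hu
  refine ⟨C (y j) * X i - C (y i) * X j,
    (isHomogeneous_C_mul_X _ _).sub (isHomogeneous_C_mul_X _ _), ?_, ?_⟩ <;>
    simp only [map_sub, map_mul, eval_C, eval_X]
  · ring
  · rw [mul_comm (y j), mul_comm (y i)]
    exact sub_ne_zero.mpr hij

theorem exists_isHomogeneous_eval_eq_of_dvd {T : Finset (σ → R)}
    (hT : ∀ x ∈ T, Ideal.span (Set.range x) = ⊤) {B : (σ → R) → MvPolynomial σ R} {D d : ℕ}
    (hB : ∀ x ∈ T, (B x).IsHomogeneous D) (hBzero : ∀ x ∈ T, ∀ y ∈ T, y ≠ x → eval y (B x) = 0)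
    (hDd : D ≤ d) {H : MvPolynomial σ R} (hH : H.IsHomogeneous d) {w : (σ → R) → R}
    (hw : ∀ x ∈ T, eval x (B x) ∣ w x - eval x H) :
    ∃ F : MvPolynomial σ R, F.IsHomogeneous d ∧ ∀ x ∈ T, eval x F = w x := by
  choose! ρ hρ using hw
  choose! L hL hLx using fun x hx => exists_isHomogeneous_one_eval_eq_one (hT x hx)
  refine ⟨H + ∑ x ∈ T, C (ρ x) * L x ^ (d - D) * B x,
    hH.add (IsHomogeneous.sum _ _ _ fun x hx => ?_), fun y hy => ?_⟩
  · have := (((hL x hx).pow (d - D)).C_mul (ρ x)).mul (hB x hx)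
    rwa [one_mul, Nat.sub_add_cancel hDd] at this
  · rw [map_add, map_sum, Finset.sum_eq_single_of_mem y hy fun x hx hxy => by
      rw [map_mul, hBzero x hx y hy hxy.symm, mul_zero]]
    simp only [map_mul, map_pow, eval_C, hLx y hy, one_pow, mul_one]
    linear_combination -hρ y hy

theorem exists_homogeneous_lagrange_family [IsDomain R] {T : Finset (σ → R)}
    (hT : ∀ x ∈ T, Ideal.span (Set.range x) = ⊤)
    (hsep : (T : Set (σ → R)).Pairwise fun x y => ∀ u : Rˣ, u • x ≠ y) :
    ∃ B : (σ → R) → MvPolynomial σ R, (∀ x ∈ T, (B x).IsHomogeneous (T.card - 1)) ∧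
      (∀ x ∈ T, eval x (B x) ≠ 0) ∧ ∀ x ∈ T, ∀ y ∈ T, y ≠ x → eval y (B x) = 0 := by
  classical
  have hZ : ∀ x ∈ T, ∀ y ∈ T, y ≠ x → ∃ Z : MvPolynomial σ R,
      Z.IsHomogeneous 1 ∧ eval y Z = 0 ∧ eval x Z ≠ 0 := fun x hx y hy hyx =>
    exists_isHomogeneous_one_eval_eq_zero_eval_ne_zero (hT x hx) (hT y hy) (hsep hx hy hyx.symm)
  choose! Z hZ hZy hZx using hZ
  refine ⟨fun x => ∏ y ∈ T.erase x, Z x y, fun x hx => ?_, fun x hx => ?_,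
    fun x hx y hy hyx => ?_⟩
  · have := IsHomogeneous.prod (T.erase x) (Z x) (fun _ => 1) fun y hy =>
      hZ x hx y (Finset.mem_of_mem_erase hy) (Finset.ne_of_mem_erase hy)
    simpa [Finset.card_erase_of_mem hx] using this
  · rw [map_prod]
    exact Finset.prod_ne_zero_iff.mpr fun y hy =>
      hZx x hx y (Finset.mem_of_mem_erase hy) (Finset.ne_of_mem_erase hy)
  · rw [map_prod]
    exact Finset.prod_eq_zero (Finset.mem_erase.mpr ⟨hyx, hy⟩) (hZy x hx y hy hyx)

end CoprimePoints

/-- If `R` is a domain such that every quotient by a nonzero principal ideal has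
enough homogeneous polynomials, and for every ideal `I` the cokernel of
`Rˣ → (R/I)ˣ` is torsion, then `R` has enough homogeneous polynomials. -/
theorem hasEnoughHomogeneousPolynomials_of_quotients
    (R : Type*) [CommRing R] [IsDomain R]
    (hquot : ∀ a : R, a ≠ 0 →
      HasEnoughHomogeneousPolynomials (R ⧸ Ideal.span {a}))
    (htors : ∀ I : Ideal R, ∀ u : (R ⧸ I)ˣ, ∃ k : ℕ, 1 ≤ k ∧
      u ^ k ∈ (Units.map (Ideal.Quotient.mk I).toMonoidHom).range) :
    HasEnoughHomogeneousPolynomials R := by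
  classical
  intro n hn S hS
  obtain ⟨T, hTS, hcov, hsep⟩ := MulAction.exists_subset_pairwise_notMem_orbit (G := Rˣ) S
  have hT : ∀ x ∈ T, Ideal.span (Set.range x) = ⊤ := fun x hx => hS x (hTS hx)
  obtain ⟨B, hB, hBx, hBzero⟩ := exists_homogeneous_lagrange_family hT hsep
  set a := ∏ x ∈ T, eval x (B x)
  set π := Ideal.Quotient.mk (Ideal.span {a})
  obtain ⟨f, e, he, hf, hfT⟩ := hquot a (Finset.prod_ne_zero_iff.mpr hBx) n hn (T.image (π ∘ ·))
    fun y hy => by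
      obtain ⟨x, hx, rfl⟩ := Finset.mem_image.mp hy
      rw [Set.range_comp, ← Ideal.map_span, hT x hx, Ideal.map_top]
  obtain ⟨H, hH, rfl⟩ := hf.exists_map_eq_of_surjective Ideal.Quotient.mk_surjective
  -- the extra power keeps the degree above that of the Lagrange family
  have hHT : ∀ x ∈ T, IsUnit (π (eval x (H ^ (T.card + 1)))) := fun x hx => by
    rw [map_pow, map_pow, eval₂_comp, ← eval_map]
    exact (hfT _ (Finset.mem_image_of_mem _ hx)).pow _
  obtain ⟨k, hk, hv⟩ := Ideal.exists_units_sub_pow_mem (htors _) T hHT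
  choose! v hv using hv
  have hdvd : ∀ x ∈ T, eval x (B x) ∣ v x - eval x ((H ^ (T.card + 1)) ^ k) := fun x hx => by
    rw [map_pow]
    exact (Finset.dvd_prod_of_mem _ hx).trans (Ideal.mem_span_singleton.mp (hv x hx))
  have hdeg : T.card + 1 ≤ e * (T.card + 1) * k :=
    (Nat.le_mul_of_pos_left _ he).trans (Nat.le_mul_of_pos_right _ hk)
  obtain ⟨F, hF, hFT⟩ :=
    exists_isHomogeneous_eval_eq_of_dvd hT hB hBzero (by omega) ((hH.pow _).pow k) hdvd
  refine ⟨F, _, by omega, hF, fun y hy => ?_⟩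
  obtain ⟨x, hx, u, rfl⟩ := hcov y hy
  rw [Units.smul_def, hF.eval_smul_s9, hFT x hx]
  exact (u.isUnit.pow _).mul (v x).isUnit
end

section
/- Let a, b, c ∈ ℤ be such that exactly one of b and c is divisible by 5. Then there is no homogeneous polynomial f ∈ ℤ[x, y] (of any degree) satisfying f(1,4) = a, f(3,5) = b, and f(4,5) = c. -/
/-! Reduce modulo 5: there `(4, 5) ≡ 3 • (3, 5)`, so homogeneity of degree `d` gives
`f(4, 5) ≡ 3 ^ d f(3, 5)`. As 3 is a unit mod 5, `5 ∣ f(3, 5) ↔ 5 ∣ f(4, 5)`, so `b` and `c` are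
both or neither divisible by 5. -/

open MvPolynomial

namespace MvPolynomial.IsHomogeneous

variable {σ R : Type*} [CommSemiring R] {f : MvPolynomial σ R} {n : ℕ}

theorem eval_smul_s10 (hf : f.IsHomogeneous n) (r : R) (x : σ → R) :
    eval (r • x) f = r ^ n * eval x f := by
  rw [eval_eq, eval_eq, Finset.mul_sum]
  refine Finset.sum_congr rfl fun m hm => ?_
  have hdeg : ∑ i ∈ m.support, m i = n := by
    simpa [Finsupp.weight_apply, Finsupp.sum] using hf (mem_support_iff.mp hm)
  simp only [Pi.smul_apply, smul_eq_mul, mul_pow, Finset.prod_mul_distrib,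
    Finset.prod_pow_eq_pow_sum, hdeg]
  ring

theorem map_eval_eq_pow_mul {S : Type*} [CommSemiring S] (hf : f.IsHomogeneous n)
    (φ : R →+* S) {x y : σ → R} {u : S} (hxy : φ ∘ x = u • (φ ∘ y)) :
    φ (eval x f) = u ^ n * φ (eval y f) := by
  rw [eval₂_comp, eval₂_comp, ← eval_map, ← eval_map, hxy, (hf.map φ).eval_smul_s10]

theorem map_eval_eq_zero_iff {S : Type*} [CommSemiring S] (hf : f.IsHomogeneous n)
    (φ : R →+* S) {x y : σ → R} {u : S} (hu : IsUnit u) (hxy : φ ∘ x = u • (φ ∘ y)) :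
    φ (eval x f) = 0 ↔ φ (eval y f) = 0 := by
  rw [hf.map_eval_eq_pow_mul φ hxy, (hu.pow n).mul_right_eq_zero]

end MvPolynomial.IsHomogeneous

/-- If exactly one of `b`, `c` is divisible by 5, then no homogeneous polynomial
`f ∈ ℤ[x,y]` satisfies `f(1,4) = a`, `f(3,5) = b`, `f(4,5) = c`. -/
theorem no_homogeneous_interpolation (a b c : ℤ)
    (h : ((5 : ℤ) ∣ b ∧ ¬ (5 : ℤ) ∣ c) ∨ (¬ (5 : ℤ) ∣ b ∧ (5 : ℤ) ∣ c)) :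
    ¬ ∃ (f : MvPolynomial (Fin 2) ℤ) (d : ℕ), f.IsHomogeneous d ∧
      MvPolynomial.eval ![1, 4] f = a ∧
      MvPolynomial.eval ![3, 5] f = b ∧
      MvPolynomial.eval ![4, 5] f = c := by
  rintro ⟨f, d, hf, -, rfl, rfl⟩
  have hmod : Int.castRingHom (ZMod 5) ∘ ![4, 5] =
      (3 : ZMod 5) • (Int.castRingHom (ZMod 5) ∘ ![3, 5]) := by
    ext i; fin_cases i <;> decide
  have h5 := hf.map_eval_eq_zero_iff _ (IsUnit.of_mul_eq_one 2 rfl) hmod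
  simp only [eq_intCast, ZMod.intCast_zmod_eq_zero_iff_dvd, Nat.cast_ofNat] at h5
  tauto
end

section
/- For an integer d ≥ 1, there exists a homogeneous polynomial f ∈ ℤ[x, y] of degree d satisfying f(1,4) = 1, f(3,5) = 1, and f(4,5) = 1 if and only if d is divisible by 60. -/
open MvPolynomial

private lemma eval_smul_of_isHomogeneous {R : Type*} [CommSemiring R] {n : ℕ}
    {f : MvPolynomial (Fin 2) R} (hf : f.IsHomogeneous n) (c : R) (v : Fin 2 → R) :
    MvPolynomial.eval (fun i => c * v i) f = c ^ n * MvPolynomial.eval v f := by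
  rw [MvPolynomial.eval_eq', MvPolynomial.eval_eq', Finset.mul_sum]
  refine Finset.sum_congr rfl fun m hm => ?_
  have hdeg : ∑ i, m i = n := by
    have h := hf (MvPolynomial.mem_support_iff.mp hm)
    rw [Finsupp.weight_apply] at h
    rw [← h, Finsupp.sum]
    simp only [Pi.one_apply, smul_eq_mul, mul_one]
    exact (Finset.sum_subset (Finset.subset_univ _)
      (fun i _ hi => Finsupp.notMem_support_iff.mp hi)).symm
  simp_rw [mul_pow]
  rw [Finset.prod_mul_distrib, Finset.prod_pow_eq_pow_sum, hdeg]
  ring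

private lemma cast_eval (p : ℕ) (w : Fin 2 → ℤ) (f : MvPolynomial (Fin 2) ℤ) :
    ((MvPolynomial.eval w f : ℤ) : ZMod p) =
      MvPolynomial.eval (fun i => ((w i : ℤ) : ZMod p))
        (MvPolynomial.map (Int.castRingHom (ZMod p)) f) := by
  rw [MvPolynomial.eval_map]
  have h := MvPolynomial.eval₂_comp_left (Int.castRingHom (ZMod p)) (RingHom.id ℤ) w f
  rw [RingHom.comp_id] at h
  exact h

private lemma six_dvd_of_pow {d : ℕ} (h : (3 : ZMod 7) ^ d = 1) : 6 ∣ d := by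
  have h2 : (3 : ZMod 7) ^ (d % 6) = 1 := by
    conv at h => rw [← Nat.div_add_mod d 6]
    rwa [pow_add, pow_mul, (by decide : (3 : ZMod 7) ^ 6 = 1), one_pow, one_mul] at h
  have hlt : d % 6 < 6 := Nat.mod_lt _ (by norm_num)
  have : d % 6 = 0 := by
    set r := d % 6 with hr
    interval_cases r <;> revert h2 <;> decide
  omega

private lemma five_dvd_of_pow {d : ℕ} (h : (4 : ZMod 11) ^ d = 1) : 5 ∣ d := by
  have h2 : (4 : ZMod 11) ^ (d % 5) = 1 := by
    conv at h => rw [← Nat.div_add_mod d 5]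
    rwa [pow_add, pow_mul, (by decide : (4 : ZMod 11) ^ 5 = 1), one_pow, one_mul] at h
  have hlt : d % 5 < 5 := Nat.mod_lt _ (by norm_num)
  have : d % 5 = 0 := by
    set r := d % 5 with hr
    interval_cases r <;> revert h2 <;> decide
  omega

private lemma four_dvd_of_pow {d : ℕ} (h : (3 : ZMod 5) ^ d = 1) : 4 ∣ d := by
  have h2 : (3 : ZMod 5) ^ (d % 4) = 1 := by
    conv at h => rw [← Nat.div_add_mod d 4]
    rwa [pow_add, pow_mul, (by decide : (3 : ZMod 5) ^ 4 = 1), one_pow, one_mul] at h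
  have hlt : d % 4 < 4 := Nat.mod_lt _ (by norm_num)
  have : d % 4 = 0 := by
    set r := d % 4 with hr
    interval_cases r <;> revert h2 <;> decide
  omega

/-- An explicit homogeneous polynomial of degree 60 taking the value 1 at
`(1,4)`, `(3,5)` and `(4,5)`. -/
noncomputable def gPoly : MvPolynomial (Fin 2) ℤ :=
  X 0 ^ 60
    + (C 4 * X 0 - X 1) * (C 5 * X 0 - C 4 * X 1)
      * (C 26570330985148503543166699317343434112180 * X 0 ^ 58
         + C (-3607193890023549789646989668) * X 1 ^ 58)
    + (C 4 * X 0 - X 1) * (C 5 * X 0 - C 3 * X 1)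
      * (C 26966722784110379377693523621985141216510 * X 0 ^ 58
         + C (-64572472528774568858160409882104897) * X 1 ^ 58)

lemma gPoly_hom : gPoly.IsHomogeneous 60 := by
  have l1 : (C 4 * X 0 - X 1 : MvPolynomial (Fin 2) ℤ).IsHomogeneous 1 :=
    (isHomogeneous_C_mul_X 4 0).sub (isHomogeneous_X _ 1)
  have l2 : (C 5 * X 0 - C 4 * X 1 : MvPolynomial (Fin 2) ℤ).IsHomogeneous 1 :=
    (isHomogeneous_C_mul_X 5 0).sub (isHomogeneous_C_mul_X 4 1)
  have l3 : (C 5 * X 0 - C 3 * X 1 : MvPolynomial (Fin 2) ℤ).IsHomogeneous 1 :=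
    (isHomogeneous_C_mul_X 5 0).sub (isHomogeneous_C_mul_X 3 1)
  have q1 : (C 26570330985148503543166699317343434112180 * X 0 ^ 58
      + C (-3607193890023549789646989668) * X 1 ^ 58 :
      MvPolynomial (Fin 2) ℤ).IsHomogeneous 58 :=
    (isHomogeneous_C_mul_X_pow _ 0 58).add (isHomogeneous_C_mul_X_pow _ 1 58)
  have q2 : (C 26966722784110379377693523621985141216510 * X 0 ^ 58
      + C (-64572472528774568858160409882104897) * X 1 ^ 58 :
      MvPolynomial (Fin 2) ℤ).IsHomogeneous 58 :=
    (isHomogeneous_C_mul_X_pow _ 0 58).add (isHomogeneous_C_mul_X_pow _ 1 58)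
  exact ((isHomogeneous_X_pow 0 60).add ((l1.mul l2).mul q1)).add ((l1.mul l3).mul q2)

lemma gPoly_e1 : MvPolynomial.eval ![1, 4] gPoly = 1 := by
  simp only [gPoly, map_add, map_mul, map_sub, map_pow, eval_C, eval_X,
    Matrix.cons_val_zero, Matrix.cons_val_one, Matrix.head_cons]
  norm_num

lemma gPoly_e2 : MvPolynomial.eval ![3, 5] gPoly = 1 := by
  simp only [gPoly, map_add, map_mul, map_sub, map_pow, eval_C, eval_X,
    Matrix.cons_val_zero, Matrix.cons_val_one, Matrix.head_cons]
  norm_num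

lemma gPoly_e3 : MvPolynomial.eval ![4, 5] gPoly = 1 := by
  simp only [gPoly, map_add, map_mul, map_sub, map_pow, eval_C, eval_X,
    Matrix.cons_val_zero, Matrix.cons_val_one, Matrix.head_cons]
  norm_num

/-- For `d ≥ 1`, there is a homogeneous polynomial `f ∈ ℤ[x,y]` of degree `d`
with `f(1,4) = f(3,5) = f(4,5) = 1` if and only if `60 ∣ d`. -/
theorem homogeneous_interpolation_iff_sixty_dvd (d : ℕ) (hd : 1 ≤ d) :
    (∃ f : MvPolynomial (Fin 2) ℤ, f.IsHomogeneous d ∧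
      MvPolynomial.eval ![1, 4] f = 1 ∧
      MvPolynomial.eval ![3, 5] f = 1 ∧
      MvPolynomial.eval ![4, 5] f = 1) ↔ 60 ∣ d := by
  constructor
  · rintro ⟨f, hf, h1, h2, h3⟩
    -- modulo 7 : (3,5) = 3 • (1,4)
    have h7 : 6 ∣ d := by
      have E14 : MvPolynomial.eval (fun i => (((![1,4] : Fin 2 → ℤ) i : ℤ) : ZMod 7))
          (MvPolynomial.map (Int.castRingHom (ZMod 7)) f) = 1 := by
        rw [← cast_eval, h1]; simp
      have E35 : MvPolynomial.eval (fun i => (((![3,5] : Fin 2 → ℤ) i : ℤ) : ZMod 7))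
          (MvPolynomial.map (Int.castRingHom (ZMod 7)) f) = 1 := by
        rw [← cast_eval, h2]; simp
      have key := eval_smul_of_isHomogeneous (hf.map (Int.castRingHom (ZMod 7))) 3
          (fun i => (((![1,4] : Fin 2 → ℤ) i : ℤ) : ZMod 7))
      rw [show (fun i => (3 : ZMod 7) * (((![1,4] : Fin 2 → ℤ) i : ℤ) : ZMod 7))
            = (fun i => (((![3,5] : Fin 2 → ℤ) i : ℤ) : ZMod 7)) from
          funext fun i => by fin_cases i <;> simp <;> decide] at key
      rw [E35, E14, mul_one] at key
      exact six_dvd_of_pow key.symm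
    -- modulo 11 : (4,5) = 4 • (1,4)
    have h11 : 5 ∣ d := by
      have E14 : MvPolynomial.eval (fun i => (((![1,4] : Fin 2 → ℤ) i : ℤ) : ZMod 11))
          (MvPolynomial.map (Int.castRingHom (ZMod 11)) f) = 1 := by
        rw [← cast_eval, h1]; simp
      have E45 : MvPolynomial.eval (fun i => (((![4,5] : Fin 2 → ℤ) i : ℤ) : ZMod 11))
          (MvPolynomial.map (Int.castRingHom (ZMod 11)) f) = 1 := by
        rw [← cast_eval, h3]; simp
      have key := eval_smul_of_isHomogeneous (hf.map (Int.castRingHom (ZMod 11))) 4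
          (fun i => (((![1,4] : Fin 2 → ℤ) i : ℤ) : ZMod 11))
      rw [show (fun i => (4 : ZMod 11) * (((![1,4] : Fin 2 → ℤ) i : ℤ) : ZMod 11))
            = (fun i => (((![4,5] : Fin 2 → ℤ) i : ℤ) : ZMod 11)) from
          funext fun i => by fin_cases i <;> simp <;> decide] at key
      rw [E45, E14, mul_one] at key
      exact five_dvd_of_pow key.symm
    -- modulo 5 : (4,5) = 3 • (3,5)
    have h5 : 4 ∣ d := by
      have E35 : MvPolynomial.eval (fun i => (((![3,5] : Fin 2 → ℤ) i : ℤ) : ZMod 5))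
          (MvPolynomial.map (Int.castRingHom (ZMod 5)) f) = 1 := by
        rw [← cast_eval, h2]; simp
      have E45 : MvPolynomial.eval (fun i => (((![4,5] : Fin 2 → ℤ) i : ℤ) : ZMod 5))
          (MvPolynomial.map (Int.castRingHom (ZMod 5)) f) = 1 := by
        rw [← cast_eval, h3]; simp
      have key := eval_smul_of_isHomogeneous (hf.map (Int.castRingHom (ZMod 5))) 3
          (fun i => (((![3,5] : Fin 2 → ℤ) i : ℤ) : ZMod 5))
      rw [show (fun i => (3 : ZMod 5) * (((![3,5] : Fin 2 → ℤ) i : ℤ) : ZMod 5))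
            = (fun i => (((![4,5] : Fin 2 → ℤ) i : ℤ) : ZMod 5)) from
          funext fun i => by fin_cases i <;> simp <;> decide] at key
      rw [E45, E35, mul_one] at key
      exact four_dvd_of_pow key.symm
    omega
  · rintro ⟨k, rfl⟩
    refine ⟨gPoly ^ k, gPoly_hom.pow k, ?_, ?_, ?_⟩
    · rw [map_pow, gPoly_e1, one_pow]
    · rw [map_pow, gPoly_e2, one_pow]
    · rw [map_pow, gPoly_e3, one_pow]
end

section
/- Let R be an integral domain of finite Krull dimension with power stable range one, i.e., for all x, y ∈ R with y ≠ 0 and (x, y) = (1) as ideals, there exist an integer n ≥ 1 and a ∈ R such that x^n + a·y is a unit of R. Then R has enough homogeneous polynomials. -/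
open MvPolynomial

def HasPowerStableRangeOne (R : Type*) [CommRing R] : Prop :=
  ∀ x y : R, y ≠ 0 → Ideal.span {x, y} = ⊤ → ∃ (n : ℕ) (a : R), 1 ≤ n ∧ IsUnit (x ^ n + a * y)

namespace MvPolynomial

variable {R σ : Type*} [CommRing R]

theorem exists_isHomogeneous_one_eval_eq_one [Fintype σ] {Q : σ → R}
    (hQ : Ideal.span (Set.range Q) = ⊤) :
    ∃ L : MvPolynomial σ R, L.IsHomogeneous 1 ∧ eval Q L = 1 := by
  obtain ⟨c, hc⟩ :=
    (Submodule.mem_span_range_iff_exists_fun R).mp (hQ ▸ Submodule.mem_top (x := 1))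
  refine ⟨∑ i, C (c i) * X i, IsHomogeneous.sum _ _ _ fun i _ => isHomogeneous_C_mul_X _ i, ?_⟩
  simpa using hc

theorem exists_isHomogeneous_eval_eq_zero_isCoprime [Fintype σ] {f : MvPolynomial σ R} {d : ℕ}
    (hf : f.IsHomogeneous d) {P Q : σ → R} (hP : IsUnit (eval P f))
    (hQ : Ideal.span (Set.range Q) = ⊤) :
    ∃ h : MvPolynomial σ R, h.IsHomogeneous d ∧ eval P h = 0 ∧
      IsCoprime (eval Q f) (eval Q h) := by
  obtain ⟨L, hL, hLQ⟩ := exists_isHomogeneous_one_eval_eq_one hQ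
  refine ⟨C (eval P f) * L ^ d - C (eval P L ^ d) * f, ?_, by simp [mul_comm], ?_⟩
  · have hLd : (L ^ d).IsHomogeneous d := by simpa using hL.pow d
    have h := ((isHomogeneous_C σ (eval P f)).mul hLd).sub
      ((isHomogeneous_C σ (eval P L ^ d)).mul hf)
    rwa [zero_add] at h
  · obtain ⟨u, hu⟩ := hP.exists_right_inv
    refine ⟨u * eval P L ^ d, u, ?_⟩
    simp only [map_sub, map_mul, eval_C, map_pow, hLQ, one_pow, mul_one]
    linear_combination hu

theorem exists_isHomogeneous_vanishing_isCoprime [Fintype σ] {f : MvPolynomial σ R} {d : ℕ}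
    (hf : f.IsHomogeneous d) {Q : σ → R} (hQ : Ideal.span (Set.range Q) = ⊤)
    (S : Finset (σ → R)) (hS : ∀ P ∈ S, IsUnit (eval P f)) :
    ∃ g : MvPolynomial σ R, g.IsHomogeneous (d * S.card) ∧ (∀ P ∈ S, eval P g = 0) ∧
      IsCoprime (eval Q f) (eval Q g) := by
  classical
  induction S using Finset.induction_on with
  | empty => exact ⟨1, isHomogeneous_one σ R, by simp, by simp [isCoprime_one_right]⟩
  | @insert P S hPS ih =>
    obtain ⟨g, hg, hgS, hgQ⟩ := ih fun P' hP' => hS P' (Finset.mem_insert_of_mem hP')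
    obtain ⟨h, hh, hhP, hhQ⟩ :=
      exists_isHomogeneous_eval_eq_zero_isCoprime hf (hS P (Finset.mem_insert_self P S)) hQ
    refine ⟨g * h, ?_, ?_, by simpa using hgQ.mul_right hhQ⟩
    · rw [Finset.card_insert_of_notMem hPS, mul_add_one]
      exact hg.mul hh
    · intro P' hP'
      rcases Finset.mem_insert.mp hP' with rfl | hP'
      · simp [hhP]
      · simp [hgS P' hP']

theorem exists_isHomogeneous_isUnit_insert (hR : HasPowerStableRangeOne R) [Fintype σ]
    [DecidableEq (σ → R)]
    {f : MvPolynomial σ R} {d : ℕ} (hd : 1 ≤ d) (hf : f.IsHomogeneous d)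
    {S : Finset (σ → R)} (hS : ∀ P ∈ S, IsUnit (eval P f))
    {Q : σ → R} (hQ : Ideal.span (Set.range Q) = ⊤) :
    ∃ (f' : MvPolynomial σ R) (d' : ℕ), 1 ≤ d' ∧ f'.IsHomogeneous d' ∧
      ∀ P ∈ insert Q S, IsUnit (eval P f') := by
  obtain ⟨g, hg, hgS, hgQ⟩ := exists_isHomogeneous_vanishing_isCoprime hf hQ S hS
  by_cases hg0 : eval Q g = 0
  · rw [hg0, isCoprime_zero_right] at hgQ
    exact ⟨f, d, hd, hf,
      Finset.forall_mem_insert _ _ (fun P => IsUnit (eval P f)) |>.mpr ⟨hgQ, hS⟩⟩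
  set k := S.card + 1
  have hcop : Ideal.span {eval Q (f ^ k), eval Q g} = ⊤ := by
    rw [Ideal.span_insert, Ideal.sup_eq_top_iff_isCoprime, map_pow]
    exact hgQ.pow_left
  obtain ⟨m, a, hm, hunit⟩ := hR _ _ hg0 hcop
  obtain ⟨L, hL, hLQ⟩ := exists_isHomogeneous_one_eval_eq_one hQ
  have hdeg : d * S.card ≤ d * k * m :=
    (Nat.mul_le_mul_left d S.card.le_succ).trans (Nat.le_mul_of_pos_right _ hm)
  refine ⟨(f ^ k) ^ m + C a * g * L ^ (d * k * m - d * S.card), d * k * m,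
    Nat.mul_pos (Nat.mul_pos hd S.card.succ_pos) hm, (hf.pow k).pow m |>.add ?_, ?_⟩
  · have h := ((isHomogeneous_C σ a).mul hg).mul (hL.pow (d * k * m - d * S.card))
    rwa [zero_add, one_mul, Nat.add_sub_cancel' hdeg] at h
  · refine Finset.forall_mem_insert _ _ _ |>.mpr ⟨by simpa [hLQ] using hunit, fun P hP => ?_⟩
    simpa [hgS P hP] using ((hS P hP).pow k).pow m

end MvPolynomial

theorem hasEnoughHomogeneousPolynomials_of_powerStableRangeOne_general
    (R : Type*) [CommRing R]
    (hpsr : ∀ x y : R, y ≠ 0 → Ideal.span {x, y} = ⊤ →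
      ∃ (n : ℕ) (a : R), 1 ≤ n ∧ IsUnit (x ^ n + a * y)) :
    HasEnoughHomogeneousPolynomials R := by
  classical
  intro n hn S
  induction S using Finset.induction_on with
  | empty => exact fun _ => ⟨X ⟨0, hn⟩, 1, le_rfl, isHomogeneous_X R _, by simp⟩
  | @insert Q S _ ih =>
    intro hS
    obtain ⟨f, d, hd, hf, hfS⟩ := ih fun P hP => hS P (Finset.mem_insert_of_mem hP)
    exact exists_isHomogeneous_isUnit_insert hpsr hd hf hfS (hS Q (Finset.mem_insert_self Q S))

/-- An integral domain of finite Krull dimension with power stable range one has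
enough homogeneous polynomials. -/
theorem hasEnoughHomogeneousPolynomials_of_powerStableRangeOne
    (R : Type*) [CommRing R] [IsDomain R]
    (hdim : ringKrullDim R < ⊤)
    (hpsr : ∀ x y : R, y ≠ 0 → Ideal.span {x, y} = ⊤ →
      ∃ (n : ℕ) (a : R), 1 ≤ n ∧ IsUnit (x ^ n + a * y)) :
    HasEnoughHomogeneousPolynomials R :=
  hasEnoughHomogeneousPolynomials_of_powerStableRangeOne_general R hpsr
end
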